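/- Gårding's inequality: Let 𝔇(v,u) = Σ_{j,k}(X_j v, a_{jk} X_k u)_φ + Σ_j (v, b_j X_j u)_φ + Σ_j (X_j v, b_j' u)_φ + (v, b u)_φ be a Dirichlet form with bounded coefficients a_{jk}, b_j, b_j', b on Ω, satisfying the strong ellipticity condition Re(Σ_{j,k} a̅_{jk} ξ_j ξ̅_k) ≥ θ|ξ|² for some θ > 0 and all ξ ∈ ℂⁿ. Then there exist C > 0 and λ ≥ 0 such that Re 𝔇(u,u) ≥ C ‖u‖²_{W^{1,2}(Ω,φ;X)} - λ‖u‖²_{L²(Ω,φ)} for all u ∈ W^{1,2}(Ω,φ;X). -/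

import Mathlib

/-! Pointwise, strong ellipticity bounds the principal part of `Re 𝔇(u,u)` below by
`θ Σ_j |X_j u|² e^{-φ}`. Every lower-order term has the shape `f · conj (c g)` with `|c| ≤ M`,
and `M |f| |g| ≤ s |f|² + t |g|²` as soon as `M² ≤ 4 s t`. Putting the weight `t = θ/4` on the
factor `X_j u` absorbs the first-order terms into half of the principal part, at the price of
multiples `M²/θ` of `‖u‖²`, which make up `λ`. -/

open MeasureTheory Real Filter

noncomputable section

/-- The `j`-th partial derivative `∂g/∂x_j`. -/
def pd {n : ℕ} {V : Type*} [NormedAddCommGroup V] [NormedSpace ℝ V]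
    (j : Fin n) (g : (Fin n → ℝ) → V) (x : Fin n → ℝ) : V :=
  fderiv ℝ g x (Pi.single j 1)

/-- The weighted differential operator `X_j = ∂/∂x_j - (∂φ/∂x_j)`. -/
def Xop {n : ℕ} (φ : (Fin n → ℝ) → ℝ) (j : Fin n) (g : (Fin n → ℝ) → ℂ)
    (x : Fin n → ℝ) : ℂ :=
  pd j g x - ((pd j φ x : ℝ) : ℂ) * g x

/-- The formal adjoint `X_j^* = -∂/∂x_j` of `X_j` with respect to the weighted
inner product `(f,g)_φ = ∫_Ω f ḡ e^{-φ}`. -/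
def Xstar {n : ℕ} (j : Fin n) (g : (Fin n → ℝ) → ℂ) (x : Fin n → ℝ) : ℂ :=
  -pd j g x

/-- Membership in `C_c^∞(Ω)`. -/
def IsTest {n : ℕ} (Ω : Set (Fin n → ℝ)) (f : (Fin n → ℝ) → ℂ) : Prop :=
  ContDiff ℝ (⊤ : ℕ∞) f ∧ HasCompactSupport f ∧ tsupport f ⊆ Ω


/-- Membership in `W^{1,2}(Ω,φ;X)` (for functions with classical derivatives):
`u` is differentiable on `Ω` and both `u` and the `X_j u` are in `L²(Ω,φ)`. -/
def MemW1 {n : ℕ} (Ω : Set (Fin n → ℝ)) (φ : (Fin n → ℝ) → ℝ)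
    (u : (Fin n → ℝ) → ℂ) : Prop :=
  (∀ x ∈ Ω, DifferentiableAt ℝ u x) ∧
    AEStronglyMeasurable u (volume.restrict Ω) ∧
    IntegrableOn (fun x => ‖u x‖ ^ 2 * Real.exp (-φ x)) Ω ∧
    ∀ j : Fin n, IntegrableOn (fun x => ‖Xop φ j u x‖ ^ 2 * Real.exp (-φ x)) Ω

/-- The Dirichlet form
`𝔇(v,u) = Σ_{jk}(X_j v, a_{jk} X_k u)_φ + Σ_j (v, b_j X_j u)_φ
  + Σ_j (X_j v, b_j' u)_φ + (v, b u)_φ`,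
with `(f,g)_φ = ∫_Ω f ḡ e^{-φ} dV`. -/
def Dform {n : ℕ} (Ω : Set (Fin n → ℝ)) (φ : (Fin n → ℝ) → ℝ)
    (a : Fin n → Fin n → (Fin n → ℝ) → ℂ) (b b' : Fin n → (Fin n → ℝ) → ℂ)
    (b0 : (Fin n → ℝ) → ℂ) (v u : (Fin n → ℝ) → ℂ) : ℂ :=
  (∑ j : Fin n, ∑ k : Fin n, ∫ x in Ω,
      Xop φ j v x * (starRingEnd ℂ) (a j k x * Xop φ k u x)
        * ((Real.exp (-φ x) : ℝ) : ℂ))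
    + (∑ j : Fin n, ∫ x in Ω,
        v x * (starRingEnd ℂ) (b j x * Xop φ j u x) * ((Real.exp (-φ x) : ℝ) : ℂ))
    + (∑ j : Fin n, ∫ x in Ω,
        Xop φ j v x * (starRingEnd ℂ) (b' j x * u x) * ((Real.exp (-φ x) : ℝ) : ℂ))
    + ∫ x in Ω, v x * (starRingEnd ℂ) (b0 x * u x) * ((Real.exp (-φ x) : ℝ) : ℂ)

open ComplexConjugate

theorem mul_mul_le_of_sq_le_four_mul {M s t : ℝ} (hs : 0 ≤ s) (ht : 0 ≤ t)
    (hst : M ^ 2 ≤ 4 * s * t) (a b : ℝ) : M * a * b ≤ s * a ^ 2 + t * b ^ 2 := by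
  nlinarith [sq_nonneg (s * a ^ 2 - t * b ^ 2), sq_nonneg (a * b), sq_nonneg (M * a * b),
    mul_nonneg hs (sq_nonneg a), mul_nonneg ht (sq_nonneg b)]

theorem norm_mul_conj_mul_ofReal_le {f g c : ℂ} {w M s t : ℝ} (hs : 0 ≤ s) (ht : 0 ≤ t)
    (hst : M ^ 2 ≤ 4 * s * t) (hw : 0 ≤ w) (hc : ‖c‖ ≤ M) :
    ‖f * conj (c * g) * (w : ℂ)‖ ≤ s * (‖f‖ ^ 2 * w) + t * (‖g‖ ^ 2 * w) := by
  have hfg : ‖f‖ * ‖c‖ * ‖g‖ ≤ s * ‖f‖ ^ 2 + t * ‖g‖ ^ 2 :=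
    calc ‖f‖ * ‖c‖ * ‖g‖ = ‖c‖ * ‖f‖ * ‖g‖ := by ring
      _ ≤ M * ‖f‖ * ‖g‖ := by gcongr
      _ ≤ s * ‖f‖ ^ 2 + t * ‖g‖ ^ 2 := mul_mul_le_of_sq_le_four_mul hs ht hst _ _
  calc ‖f * conj (c * g) * (w : ℂ)‖ = ‖f‖ * ‖c‖ * ‖g‖ * w := by
        simp only [norm_mul, RCLike.norm_conj, Complex.norm_real, Real.norm_of_nonneg hw, mul_assoc]
    _ ≤ (s * ‖f‖ ^ 2 + t * ‖g‖ ^ 2) * w := by gcongr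
    _ = s * (‖f‖ ^ 2 * w) + t * (‖g‖ ^ 2 * w) := by ring

section WeightedL2

variable {α : Type*} [MeasurableSpace α] {μ : Measure α} {w : α → ℝ}

theorem integrable_mul_conj_mul_ofReal {f g c : α → ℂ} {M : ℝ}
    (hf : AEStronglyMeasurable f μ) (hg : AEStronglyMeasurable g μ)
    (hc : AEStronglyMeasurable c μ) (hw : AEStronglyMeasurable w μ) (hw0 : ∀ x, 0 ≤ w x)
    (hcM : ∀ᵐ x ∂μ, ‖c x‖ ≤ M)
    (hf2 : Integrable (fun x => ‖f x‖ ^ 2 * w x) μ)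
    (hg2 : Integrable (fun x => ‖g x‖ ^ 2 * w x) μ) :
    Integrable (fun x => f x * conj (c x * g x) * (w x : ℂ)) μ := by
  have hM : M ^ 2 ≤ 4 * (|M| / 2) * (|M| / 2) := by nlinarith [sq_abs M]
  refine ((hf2.const_mul (|M| / 2)).add (hg2.const_mul (|M| / 2))).mono'
    ((hf.mul ((hc.mul hg).star)).mul (Complex.continuous_ofReal.comp_aestronglyMeasurable hw)) ?_
  filter_upwards [hcM] with x hx
  exact norm_mul_conj_mul_ofReal_le (by positivity) (by positivity) hM (hw0 x) hx

theorem neg_le_re_integral_mul_conj_mul_ofReal {f g c : α → ℂ} {M s t : ℝ}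
    (hs : 0 ≤ s) (ht : 0 ≤ t) (hst : M ^ 2 ≤ 4 * s * t) (hw0 : ∀ x, 0 ≤ w x)
    (hcM : ∀ᵐ x ∂μ, ‖c x‖ ≤ M)
    (hf2 : Integrable (fun x => ‖f x‖ ^ 2 * w x) μ)
    (hg2 : Integrable (fun x => ‖g x‖ ^ 2 * w x) μ) :
    -(s * ∫ x, ‖f x‖ ^ 2 * w x ∂μ + t * ∫ x, ‖g x‖ ^ 2 * w x ∂μ)
      ≤ (∫ x, f x * conj (c x * g x) * (w x : ℂ) ∂μ).re := by
  -- No measurability is needed: `-∫ ‖F‖ ≤ Re ∫ F` also holds for the junk value `∫ F = 0`.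
  have hbound : ∀ᵐ x ∂μ, ‖f x * conj (c x * g x) * (w x : ℂ)‖
      ≤ s * (‖f x‖ ^ 2 * w x) + t * (‖g x‖ ^ 2 * w x) := by
    filter_upwards [hcM] with x hx
    exact norm_mul_conj_mul_ofReal_le hs ht hst (hw0 x) hx
  have hint := (hf2.const_mul s).add (hg2.const_mul t)
  calc -(s * ∫ x, ‖f x‖ ^ 2 * w x ∂μ + t * ∫ x, ‖g x‖ ^ 2 * w x ∂μ)
      = -∫ x, s * (‖f x‖ ^ 2 * w x) + t * (‖g x‖ ^ 2 * w x) ∂μ := by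
        rw [integral_add (hf2.const_mul s) (hg2.const_mul t), integral_const_mul,
          integral_const_mul]
    _ ≤ -∫ x, ‖f x * conj (c x * g x) * (w x : ℂ)‖ ∂μ :=
        neg_le_neg (integral_mono_of_nonneg (ae_of_all _ fun _ => norm_nonneg _) hint hbound)
    _ ≤ -‖∫ x, f x * conj (c x * g x) * (w x : ℂ) ∂μ‖ :=
        neg_le_neg (norm_integral_le_integral_norm _)
    _ ≤ _ := neg_le_of_abs_le (Complex.abs_re_le_norm _)

theorem re_sum_sum_mul_conj_mul_ofReal {n : ℕ} (ξ : Fin n → ℂ) (A : Fin n → Fin n → ℂ) (w : ℝ) :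
    (∑ j, ∑ k, ξ j * conj (A j k * ξ k) * (w : ℂ)).re
      = w * (∑ j, ∑ k, conj (A j k) * ξ j * conj (ξ k)).re := by
  rw [← Complex.re_ofReal_mul, Finset.mul_sum]
  congr 1
  refine Finset.sum_congr rfl fun j _ => ?_
  rw [Finset.mul_sum]
  refine Finset.sum_congr rfl fun k _ => ?_
  rw [map_mul]
  ring

theorem mul_sum_integral_le_re_sum_sum_integral {n : ℕ} {ξ : Fin n → α → ℂ}
    {A : Fin n → Fin n → α → ℂ} {θ M : ℝ}
    (hξ : ∀ j, AEStronglyMeasurable (ξ j) μ) (hA : ∀ j k, AEStronglyMeasurable (A j k) μ)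
    (hw : AEStronglyMeasurable w μ) (hw0 : ∀ x, 0 ≤ w x)
    (hAM : ∀ j k, ∀ᵐ x ∂μ, ‖A j k x‖ ≤ M)
    (hξ2 : ∀ j, Integrable (fun x => ‖ξ j x‖ ^ 2 * w x) μ)
    (hell : ∀ᵐ x ∂μ, θ * ∑ j, ‖ξ j x‖ ^ 2
        ≤ (∑ j, ∑ k, conj (A j k x) * ξ j x * conj (ξ k x)).re) :
    θ * ∑ j, ∫ x, ‖ξ j x‖ ^ 2 * w x ∂μ
      ≤ (∑ j, ∑ k, ∫ x, ξ j x * conj (A j k x * ξ k x) * (w x : ℂ) ∂μ).re := by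
  have hI : ∀ j k, Integrable (fun x => ξ j x * conj (A j k x * ξ k x) * (w x : ℂ)) μ :=
    fun j k => integrable_mul_conj_mul_ofReal (hξ j) (hξ k) (hA j k) hw hw0 (hAM j k)
      (hξ2 j) (hξ2 k)
  have hsum : ∑ j, ∑ k, ∫ x, ξ j x * conj (A j k x * ξ k x) * (w x : ℂ) ∂μ
      = ∫ x, ∑ j, ∑ k, ξ j x * conj (A j k x * ξ k x) * (w x : ℂ) ∂μ := by
    rw [integral_finsetSum _ fun j _ => integrable_finsetSum _ fun k _ => hI j k]
    exact Finset.sum_congr rfl fun j _ => (integral_finsetSum _ fun k _ => hI j k).symm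
  have hIsum : Integrable (fun x => ∑ j, ∑ k, ξ j x * conj (A j k x * ξ k x) * (w x : ℂ)) μ :=
    integrable_finsetSum _ fun j _ => integrable_finsetSum _ fun k _ => hI j k
  have hre : (∫ x, ∑ j, ∑ k, ξ j x * conj (A j k x * ξ k x) * (w x : ℂ) ∂μ).re
      = ∫ x, (∑ j, ∑ k, ξ j x * conj (A j k x * ξ k x) * (w x : ℂ)).re ∂μ :=
    (integral_re hIsum).symm
  rw [hsum, hre, ← integral_finsetSum _ fun j _ => hξ2 j, ← integral_const_mul]
  refine integral_mono_ae ((integrable_finsetSum _ fun j _ => hξ2 j).const_mul θ)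
    (Complex.reCLM.integrable_comp hIsum) ?_
  filter_upwards [hell] with x hx
  calc θ * ∑ j, ‖ξ j x‖ ^ 2 * w x = w x * (θ * ∑ j, ‖ξ j x‖ ^ 2) := by
        rw [← Finset.sum_mul]; ring
    _ ≤ w x * (∑ j, ∑ k, conj (A j k x) * ξ j x * conj (ξ k x)).re :=
        mul_le_mul_of_nonneg_left hx (hw0 x)
    _ = _ := (re_sum_sum_mul_conj_mul_ofReal _ _ _).symm

end WeightedL2

theorem aestronglyMeasurable_Xop {n : ℕ} {μ : Measure (Fin n → ℝ)} (φ : (Fin n → ℝ) → ℝ)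
    (j : Fin n) {u : (Fin n → ℝ) → ℂ} (hu : AEStronglyMeasurable u μ) :
    AEStronglyMeasurable (Xop φ j u) μ :=
  (measurable_fderiv_apply_const ℝ u (Pi.single j 1)).aestronglyMeasurable.sub
    ((Complex.measurable_ofReal.comp
      (measurable_fderiv_apply_const ℝ φ (Pi.single j 1))).aestronglyMeasurable.mul hu)

theorem statement11_general {n : ℕ} (Ω : Set (Fin n → ℝ)) (hΩ : IsOpen Ω)
    (φ : (Fin n → ℝ) → ℝ) (hφ : ContDiffOn ℝ (⊤ : ℕ∞) φ Ω)
    (a : Fin n → Fin n → (Fin n → ℝ) → ℂ) (b b' : Fin n → (Fin n → ℝ) → ℂ)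
    (b0 : (Fin n → ℝ) → ℂ)
    (ha : ∀ j k, Continuous (a j k))
    (M : ℝ)
    (haM : ∀ j k, ∀ x ∈ Ω, ‖a j k x‖ ≤ M) (hbM : ∀ j, ∀ x ∈ Ω, ‖b j x‖ ≤ M)
    (hb'M : ∀ j, ∀ x ∈ Ω, ‖b' j x‖ ≤ M) (hb0M : ∀ x ∈ Ω, ‖b0 x‖ ≤ M)
    (θ : ℝ) (hθ : 0 < θ)
    (hell : ∀ x ∈ Ω, ∀ ξ : Fin n → ℂ,
      θ * (∑ j : Fin n, ‖ξ j‖ ^ 2)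
        ≤ (∑ j : Fin n, ∑ k : Fin n,
            (starRingEnd ℂ) (a j k x) * ξ j * (starRingEnd ℂ) (ξ k)).re) :
    ∃ C : ℝ, 0 < C ∧ ∃ lam : ℝ, 0 ≤ lam ∧
      ∀ u : (Fin n → ℝ) → ℂ, MemW1 Ω φ u →
        C * ((∫ x in Ω, ‖u x‖ ^ 2 * Real.exp (-φ x))
              + ∑ j : Fin n, ∫ x in Ω, ‖Xop φ j u x‖ ^ 2 * Real.exp (-φ x))
            - lam * ∫ x in Ω, ‖u x‖ ^ 2 * Real.exp (-φ x)
          ≤ (Dform Ω φ a b b' b0 u u).re := by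
  refine ⟨θ / 2, by positivity, 2 * n * (M ^ 2 / θ) + |M| + θ / 2, by positivity, ?_⟩
  rintro u ⟨-, hu, hu2, hXu2⟩
  have hΩm := hΩ.measurableSet
  have onΩ {P : (Fin n → ℝ) → Prop} (h : ∀ x ∈ Ω, P x) : ∀ᵐ x ∂volume.restrict Ω, P x :=
    ae_restrict_of_forall_mem hΩm h
  have hw : AEStronglyMeasurable (fun x => Real.exp (-φ x)) (volume.restrict Ω) :=
    (Real.continuous_exp.comp_continuousOn hφ.continuousOn.neg).aestronglyMeasurable hΩm
  have hw0 (x : Fin n → ℝ) : 0 ≤ Real.exp (-φ x) := (Real.exp_pos _).le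
  have hXu (j : Fin n) := aestronglyMeasurable_Xop φ j hu
  have hprincipal := mul_sum_integral_le_re_sum_sum_integral (ξ := fun j => Xop φ j u) hXu
    (fun j k => (ha j k).aestronglyMeasurable) hw hw0 (fun j k => onΩ (haM j k)) hXu2
    (onΩ fun x hx => hell x hx _)
  have hst : M ^ 2 ≤ 4 * (M ^ 2 / θ) * (θ / 4) := by field_simp; rfl
  have hst' : M ^ 2 ≤ 4 * (θ / 4) * (M ^ 2 / θ) := by linarith
  have hst0 : M ^ 2 ≤ 4 * (|M| / 2) * (|M| / 2) := by nlinarith [sq_abs M]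
  have hb_sum := Finset.sum_le_sum fun j (_ : j ∈ Finset.univ) =>
    neg_le_re_integral_mul_conj_mul_ofReal (by positivity) (by positivity) hst hw0
      (onΩ (hbM j)) hu2 (hXu2 j)
  have hb'_sum := Finset.sum_le_sum fun j (_ : j ∈ Finset.univ) =>
    neg_le_re_integral_mul_conj_mul_ofReal (by positivity) (by positivity) hst' hw0
      (onΩ (hb'M j)) (hXu2 j) hu2
  have hb0_bound := neg_le_re_integral_mul_conj_mul_ofReal (by positivity) (by positivity)
    hst0 hw0 (onΩ hb0M) hu2 hu2
  simp only [Finset.sum_neg_distrib, Finset.sum_add_distrib, ← Finset.mul_sum, Finset.sum_const,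
    Finset.card_univ, Fintype.card_fin, nsmul_eq_mul] at hb_sum hb'_sum
  simp only [Dform, Complex.add_re, Complex.re_sum] at hprincipal ⊢
  linarith

/-- Gårding's inequality: if the Dirichlet form `𝔇` has bounded
coefficients `a_{jk}, b_j, b_j', b` on `Ω` and satisfies the strong ellipticity
condition `Re(Σ_{jk} a̅_{jk} ξ_j ξ̄_k) ≥ θ|ξ|²` for some `θ > 0`, then there
exist `C > 0` and `λ ≥ 0` with
`Re 𝔇(u,u) ≥ C ‖u‖²_{W^{1,2}(Ω,φ;X)} - λ‖u‖²_{L²(Ω,φ)}`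
for all `u ∈ W^{1,2}(Ω,φ;X)`. -/
theorem statement11 {n : ℕ} (Ω : Set (Fin n → ℝ)) (hΩ : IsOpen Ω)
    (φ : (Fin n → ℝ) → ℝ) (hφ : ContDiffOn ℝ (⊤ : ℕ∞) φ Ω)
    (a : Fin n → Fin n → (Fin n → ℝ) → ℂ) (b b' : Fin n → (Fin n → ℝ) → ℂ)
    (b0 : (Fin n → ℝ) → ℂ)
    (ha : ∀ j k, Continuous (a j k)) (hb : ∀ j, Continuous (b j))
    (hb' : ∀ j, Continuous (b' j)) (hb0 : Continuous b0)
    (M : ℝ)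
    (haM : ∀ j k, ∀ x ∈ Ω, ‖a j k x‖ ≤ M) (hbM : ∀ j, ∀ x ∈ Ω, ‖b j x‖ ≤ M)
    (hb'M : ∀ j, ∀ x ∈ Ω, ‖b' j x‖ ≤ M) (hb0M : ∀ x ∈ Ω, ‖b0 x‖ ≤ M)
    (θ : ℝ) (hθ : 0 < θ)
    (hell : ∀ x ∈ Ω, ∀ ξ : Fin n → ℂ,
      θ * (∑ j : Fin n, ‖ξ j‖ ^ 2)
        ≤ (∑ j : Fin n, ∑ k : Fin n,
            (starRingEnd ℂ) (a j k x) * ξ j * (starRingEnd ℂ) (ξ k)).re) :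
    ∃ C : ℝ, 0 < C ∧ ∃ lam : ℝ, 0 ≤ lam ∧
      ∀ u : (Fin n → ℝ) → ℂ, MemW1 Ω φ u →
        C * ((∫ x in Ω, ‖u x‖ ^ 2 * Real.exp (-φ x))
              + ∑ j : Fin n, ∫ x in Ω, ‖Xop φ j u x‖ ^ 2 * Real.exp (-φ x))
            - lam * ∫ x in Ω, ‖u x‖ ^ 2 * Real.exp (-φ x)
          ≤ (Dform Ω φ a b b' b0 u u).re :=
  statement11_general Ω hΩ φ hφ a b b' b0 ha M haM hbM hb'M hb0M θ hθ hell
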